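/- arXiv:2212.03087 — 6 statements merged into one kernel-verified Lean document; each statement's English description precedes it below -/
import Mathlib

section
/- Let N ≥ 1 and let w_1,…,w_N, A_1,…,A_N be positive reals with √w_1 · A_1 ≥ √w_i · A_i for all i. For each j define γ_j = ∑_{i=1}^N √w_i (√w_i A_i − √w_j A_j). Then γ_1 ≤ 0, and for every j, γ_j ≤ ((∑_{i=1}^N √w_i) / √w_j) · (−γ_1); in particular γ_j ≤ ((∑_{i=1}^N √w_i) / min_i √w_i) · |γ_1|. -/
/-- With source `1` (index `⟨0, hN⟩`) maximizing `√(w i) * A i`, the drift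
quantities `γ j = ∑ i, √(w i) * (√(w i) * A i - √(w j) * A j)` satisfy `γ 1 ≤ 0`,
`γ j ≤ (∑ i, √(w i)) / √(w j) * (-γ 1)` for every `j`, and in particular
`γ j ≤ (∑ i, √(w i)) / (min i, √(w i)) * |γ 1|`. -/
theorem gamma_drift_bounds
    (N : ℕ) (hN : 1 ≤ N)
    (w A : Fin N → ℝ) (hw : ∀ i, 0 < w i) (hA : ∀ i, 0 < A i)
    (hmax : ∀ i, Real.sqrt (w i) * A i ≤ Real.sqrt (w ⟨0, hN⟩) * A ⟨0, hN⟩)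
    (γ : Fin N → ℝ)
    (hγ : ∀ j, γ j = ∑ i, Real.sqrt (w i) * (Real.sqrt (w i) * A i - Real.sqrt (w j) * A j)) :
    γ ⟨0, hN⟩ ≤ 0
    ∧ (∀ j, γ j ≤ (∑ i, Real.sqrt (w i)) / Real.sqrt (w j) * (-γ ⟨0, hN⟩))
    ∧ (∀ j, γ j ≤ (∑ i, Real.sqrt (w i))
          / (Finset.univ.inf' ⟨⟨0, hN⟩, Finset.mem_univ _⟩ fun i => Real.sqrt (w i))
          * |γ ⟨0, hN⟩|) := by
  set o : Fin N := ⟨0, hN⟩ with ho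
  set s : Fin N → ℝ := fun i => Real.sqrt (w i) with hs
  have hspos : ∀ i, 0 < s i := fun i => Real.sqrt_pos.mpr (hw i)
  have hsum_pos : 0 < ∑ i, s i := by
    apply Finset.sum_pos (fun i _ => hspos i) ⟨o, Finset.mem_univ _⟩
  have h1 : γ o ≤ 0 := by
    rw [hγ]
    apply Finset.sum_nonpos
    intro i _
    exact mul_nonpos_of_nonneg_of_nonpos (Real.sqrt_nonneg _) (sub_nonpos.mpr (hmax i))
  have hneg : -γ o = ∑ i, s i * (s o * A o - s i * A i) := by
    rw [hγ, ← Finset.sum_neg_distrib]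
    exact Finset.sum_congr rfl fun i _ => by ring
  have hterm : ∀ j, s j * (s o * A o - s j * A j) ≤ -γ o := by
    intro j
    rw [hneg]
    exact Finset.single_le_sum
      (f := fun i => s i * (s o * A o - s i * A i))
      (fun i _ => mul_nonneg (le_of_lt (hspos i)) (sub_nonneg.mpr (hmax i)))
      (Finset.mem_univ j)
  have h2 : ∀ j, γ j ≤ (∑ i, s i) / s j * (-γ o) := by
    intro j
    have step1 : γ j ≤ (∑ i, s i) * (s o * A o - s j * A j) := by
      rw [hγ, Finset.sum_mul]
      apply Finset.sum_le_sum
      intro i _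
      apply mul_le_mul_of_nonneg_left _ (le_of_lt (hspos i))
      exact sub_le_sub_right (hmax i) _
    calc γ j ≤ (∑ i, s i) * (s o * A o - s j * A j) := step1
      _ = (∑ i, s i) / s j * (s j * (s o * A o - s j * A j)) := by
          rw [div_mul_eq_mul_div, mul_comm (s j), ← mul_assoc, mul_div_assoc,
            mul_assoc, ← mul_div_assoc, mul_div_cancel_left₀ _ (hspos j).ne']
      _ ≤ (∑ i, s i) / s j * (-γ o) := by
          apply mul_le_mul_of_nonneg_left (hterm j)
          positivity
  refine ⟨h1, h2, fun j => ?_⟩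
  have habs : |γ o| = -γ o := abs_of_nonpos h1
  rw [habs]
  refine le_trans (h2 j) ?_
  apply mul_le_mul_of_nonneg_right _ (by linarith)
  have hm : 0 < Finset.univ.inf' ⟨o, Finset.mem_univ _⟩ s :=
    (Finset.lt_inf'_iff _).mpr (fun i _ => hspos i)
  exact div_le_div_of_nonneg_left (le_of_lt hsum_pos) hm
    (Finset.inf'_le _ (Finset.mem_univ j))
end

section
/- Let N ≥ 1, let w_1,…,w_N and A_1,…,A_N be positive integers, and let α > (N−1)(∑_{i=1}^N √w_i)/(min_j √w_j). Then ∑_{j=1}^N √w_j A_j ( √w_j/(∑_{i=1}^N √w_i) − α^{w_j A_j^2}/(∑_{i=1}^N α^{w_i A_i^2}) ) ≤ 0. -/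
/-- **Lemma 2 of the paper.** For positive integer weights and ages and
`α > (N-1)(∑ i, √(w i)) / (min j, √(w j))`, the expected one-slot Lyapunov drift of
Fresh-CSMA is at most that of the optimal stationary randomized policy:
`∑ j, √(w j) * A j * (√(w j)/∑ i √(w i) - α^(w j A j²)/∑ i α^(w i A i²)) ≤ 0`. -/
theorem fresh_csma_drift_le_stationary
    (N : ℕ) (hN : 1 ≤ N)
    (w A : Fin N → ℕ) (hw : ∀ i, 0 < w i) (hA : ∀ i, 0 < A i)
    (α : ℝ)
    (hα : ((N : ℝ) - 1) * (∑ i, Real.sqrt (w i))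
        / (Finset.univ.inf' ⟨⟨0, hN⟩, Finset.mem_univ _⟩ fun j => Real.sqrt (w j)) < α) :
    ∑ j, Real.sqrt (w j) * (A j : ℝ) *
        (Real.sqrt (w j) / (∑ i, Real.sqrt (w i))
          - α ^ (w j * (A j) ^ 2) / (∑ i, α ^ (w i * (A i) ^ 2))) ≤ 0 := by
  classical
  haveI : Nonempty (Fin N) := ⟨⟨0, hN⟩⟩
  set s : Fin N → ℝ := fun j => Real.sqrt (w j) with hs
  have hspos : ∀ j, 0 < s j := fun j => Real.sqrt_pos.2 (by exact_mod_cast hw j)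
  set S : ℝ := ∑ i, s i with hSdef
  have hSpos : 0 < S := Finset.sum_pos (fun i _ => hspos i) Finset.univ_nonempty
  set μ : ℝ := Finset.univ.inf' ⟨⟨0, hN⟩, Finset.mem_univ _⟩ s with hμdef
  have hμpos : 0 < μ := by
    obtain ⟨j, _, hj⟩ := Finset.exists_mem_eq_inf' ⟨⟨0, hN⟩, Finset.mem_univ (⟨0, hN⟩ : Fin N)⟩ s
    rw [hμdef, hj]; exact hspos j
  have hμle : ∀ j, μ ≤ s j := fun j => Finset.inf'_le s (Finset.mem_univ j)
  have hαpos : 0 < α := by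
    refine lt_of_le_of_lt ?_ hα
    apply div_nonneg _ hμpos.le
    apply mul_nonneg _ hSpos.le
    have : (1 : ℝ) ≤ N := by exact_mod_cast hN
    linarith
  set m : Fin N → ℕ := fun i => w i * A i ^ 2 with hm
  set T : ℝ := ∑ i, α ^ m i with hTdef
  have hTpos : 0 < T := Finset.sum_pos (fun i _ => pow_pos hαpos _) Finset.univ_nonempty
  set c : Fin N → ℝ := fun j => s j * (A j : ℝ) with hc
  have hcsqrt : ∀ j, c j = Real.sqrt (m j) := by
    intro j
    have : ((m j : ℕ) : ℝ) = (w j : ℝ) * ((A j : ℝ)) ^ 2 := by push_cast [hm]; ring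
    rw [hc, this, Real.sqrt_mul (by positivity), Real.sqrt_sq (by positivity)]
  -- maximal index
  obtain ⟨jm, _, hjm⟩ := Finset.exists_max_image Finset.univ c ⟨⟨0, hN⟩, Finset.mem_univ _⟩
  have hjm' : ∀ j, c j ≤ c jm := fun j => hjm j (Finset.mem_univ j)
  set π : Fin N → ℝ := fun j => s j / S with hπ
  set r : Fin N → ℝ := fun j => α ^ m j / T with hr
  have hsumπ : ∑ j, π j = 1 := by
    rw [hπ]; rw [← Finset.sum_div]; exact div_self hSpos.ne'
  have hsumr : ∑ j, r j = 1 := by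
    rw [hr]; rw [← Finset.sum_div]; exact div_self hTpos.ne'
  -- key: for non-maximal j, r j ≤ π j
  have key : ∀ j, c j < c jm → r j ≤ π j := by
    intro j hlt
    -- N ≥ 2
    have hne : j ≠ jm := by intro h; rw [h] at hlt; exact lt_irrefl _ hlt
    have hN2 : (2 : ℝ) ≤ N := by
      have : 1 < Fintype.card (Fin N) := Fintype.one_lt_card_iff.2 ⟨j, jm, hne⟩
      rw [Fintype.card_fin] at this
      exact_mod_cast this
    -- α > S / s j
    have hαS : S / s j < α := by
      refine lt_of_le_of_lt ?_ hα
      rw [div_le_div_iff₀ (hspos j) hμpos]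
      calc S * μ ≤ S * s j := by nlinarith [hμle j, hSpos]
        _ ≤ (((N : ℝ) - 1) * S) * s j := by nlinarith [mul_pos hSpos (hspos j)]
        _ = ((N : ℝ) - 1) * S * s j := by ring
    have hα1 : 1 < α := by
      have hsj : s j ≤ S := Finset.single_le_sum (fun i _ => (hspos i).le) (Finset.mem_univ j)
      have : (1 : ℝ) ≤ S / s j := (one_le_div (hspos j)).2 hsj
      linarith
    -- m j < m jm
    have hmlt : m j < m jm := by
      by_contra h
      push_neg at h
      have : Real.sqrt (m jm) ≤ Real.sqrt (m j) := Real.sqrt_le_sqrt (by exact_mod_cast h)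
      rw [← hcsqrt, ← hcsqrt] at this
      exact absurd hlt (not_lt.2 this)
    -- r j ≤ 1/α
    have hr1 : r j ≤ 1 / α := by
      rw [hr, div_le_div_iff₀ hTpos hαpos]
      have h1 : α ^ m j * α = α ^ (m j + 1) := (pow_succ α (m j)).symm
      have h2 : α ^ (m j + 1) ≤ α ^ m jm := pow_le_pow_right₀ hα1.le hmlt
      have h3 : α ^ m jm ≤ T := Finset.single_le_sum (fun i _ => (pow_pos hαpos (m i)).le)
        (Finset.mem_univ jm)
      linarith
    have hπ1 : 1 / α ≤ π j := by
      rw [hπ, div_le_div_iff₀ hαpos hSpos]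
      have := (div_lt_iff₀ (hspos j)).1 hαS
      nlinarith
    linarith
  -- rewrite the goal
  have hgoal : (∑ j, Real.sqrt (w j) * (A j : ℝ) *
        (Real.sqrt (w j) / (∑ i, Real.sqrt (w i))
          - α ^ (w j * (A j) ^ 2) / (∑ i, α ^ (w i * (A i) ^ 2))))
      = ∑ j, (c j - c jm) * (π j - r j) + c jm * (∑ j, (π j - r j)) := by
    rw [Finset.mul_sum, ← Finset.sum_add_distrib]
    apply Finset.sum_congr rfl
    intro j _
    simp only [hc, hπ, hr, hs, hSdef, hTdef, hm]
    ring
  rw [hgoal, Finset.sum_sub_distrib, hsumπ, hsumr, sub_self, mul_zero, add_zero]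
  apply Finset.sum_nonpos
  intro j _
  rcases eq_or_lt_of_le (hjm' j) with h | h
  · rw [h, sub_self, zero_mul]
  · exact mul_nonpos_of_nonpos_of_nonneg (by linarith) (by have := key j h; linarith)
end

section
/- Let λ_i, λ_j > 0, let β > 1 and let B be a positive integer. Let Z_i and Z_j be independent random variables, exponentially distributed with rates λ_i and λ_j respectively, and define the discrete backoff timers D_i = max(B + ⌊log_β Z_i⌋, 0) and D_j = max(B + ⌊log_β Z_j⌋, 0). Then P(D_i ≠ D_j) ≥ ψ(B, β, λ_i, λ_j) + ψ(B, β, λ_j, λ_i), where ψ(B, β, λ_i, λ_j) = λ_i e^{−β^{−B}(λ_i + βλ_j)}/(λ_i + βλ_j) + (e^{λ_i β^{−B}} − 1) e^{−β^{−B}(λ_i + βλ_j)}. -/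
open MeasureTheory ProbabilityTheory

/-- The function `ψ(B, β, λᵢ, λⱼ)` from Theorem 3 of the paper. -/
noncomputable def psi (B β li lj : ℝ) : ℝ :=
  li * Real.exp (-(β ^ (-B)) * (li + β * lj)) / (li + β * lj)
    + (Real.exp (li * β ^ (-B)) - 1) * Real.exp (-(β ^ (-B)) * (li + β * lj))

/-! Put `x = β ^ (-B)`. If `0 < Zᵢ` and `β * max Zᵢ x < Zⱼ`, then `Dᵢ < Dⱼ`: clamping `Zᵢ` below
at `x` does not change `Dᵢ` (below `x` the timer is already `0`), and multiplying by `β` raises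
`⌊log_β⌋` by one. Under the product of exponential laws this region has measure
`(1 - e^{-λᵢ x}) e^{-λⱼ β x} + ∫ₓ^∞ λᵢ e^{-λᵢ s} e^{-λⱼ β s} ds = ψ(B, β, λᵢ, λⱼ)`, and the region
and its mirror image are disjoint parts of the event `Dᵢ ≠ Dⱼ`. -/

open Real Set

lemma floor_logb_lt_floor_logb_of_mul_le {β y w : ℝ} (hβ : 1 < β) (hy : 0 < y)
    (h : β * y ≤ w) : ⌊logb β y⌋ < ⌊logb β w⌋ := by
  have hlog : logb β y + 1 ≤ logb β w := by
    rw [← logb_self_eq_one hβ, ← logb_mul hy.ne' (by positivity)]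
    exact logb_le_logb_of_le hβ (by positivity) (by linarith)
  calc ⌊logb β y⌋ < ⌊logb β y⌋ + 1 := lt_add_one _
    _ = ⌊logb β y + 1⌋ := (Int.floor_add_one _).symm
    _ ≤ ⌊logb β w⌋ := Int.floor_le_floor hlog

noncomputable def backoffTimer (B : ℕ) (β z : ℝ) : ℤ := max ((B : ℤ) + ⌊logb β z⌋) 0

lemma backoffTimer_lt_backoffTimer {B : ℕ} {β z w : ℝ} (hβ : 1 < β) (hz : 0 < z)
    (hzw : β * max z (β ^ (-(B : ℝ))) ≤ w) : backoffTimer B β z < backoffTimer B β w := by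
  set y := max z (β ^ (-(B : ℝ)))
  have hy : 0 < y := hz.trans_le (le_max_left _ _)
  have hBy : -(B : ℤ) ≤ ⌊logb β y⌋ := by
    rw [Int.le_floor]
    push_cast
    calc -(B : ℝ) = logb β (β ^ (-(B : ℝ))) := (logb_rpow (by linarith) hβ.ne').symm
      _ ≤ logb β y := logb_le_logb_of_le hβ (by positivity) (le_max_right _ _)
  calc backoffTimer B β z ≤ B + ⌊logb β y⌋ :=
        max_le (by gcongr; exact le_max_left _ _) (by omega)
    _ < B + ⌊logb β w⌋ := by gcongr; exact floor_logb_lt_floor_logb_of_mul_le hβ hy hzw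
    _ ≤ backoffTimer B β w := le_max_left _ _

lemma expMeasure_eq_withDensity (r : ℝ) : expMeasure r = volume.withDensity (exponentialPDF r) :=
  rfl

lemma one_sub_exp_neg_mul_nonneg {r t : ℝ} (hr : 0 ≤ r) (ht : 0 ≤ t) :
    0 ≤ 1 - exp (-(r * t)) :=
  sub_nonneg.mpr (exp_le_one_iff.mpr (neg_nonpos.mpr (mul_nonneg hr ht)))

lemma expMeasure_Ioi {r t : ℝ} (hr : 0 < r) (ht : 0 ≤ t) :
    expMeasure r (Ioi t) = ENNReal.ofReal (exp (-(r * t))) := by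
  have := isProbabilityMeasure_expMeasure hr
  rw [← compl_Iic, prob_compl_eq_one_sub measurableSet_Iic, ← ofReal_cdf, cdf_expMeasure_eq hr,
    if_pos ht, ← ENNReal.ofReal_one,
    ← ENNReal.ofReal_sub _ (one_sub_exp_neg_mul_nonneg hr.le ht), sub_sub_cancel]

lemma expMeasure_Ioc_zero {r t : ℝ} (hr : 0 < r) (ht : 0 ≤ t) :
    expMeasure r (Ioc 0 t) = ENNReal.ofReal (1 - exp (-(r * t))) := by
  have := isProbabilityMeasure_expMeasure hr
  rw [← measure_cdf (expMeasure r), StieltjesFunction.measure_Ioc, cdf_expMeasure_eq hr,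
    cdf_expMeasure_eq hr, if_pos ht, if_pos le_rfl]
  simp

lemma setLIntegral_Ioi_exp_expMeasure {a c x : ℝ} (ha : 0 < a) (hac : 0 < a + c) (hx : 0 ≤ x) :
    ∫⁻ s in Ioi x, ENNReal.ofReal (exp (-(c * s))) ∂expMeasure a
      = ENNReal.ofReal (a * exp (-((a + c) * x)) / (a + c)) := by
  have hpdf : Measurable (exponentialPDF a) := (measurable_exponentialPDFReal a).ennreal_ofReal
  rw [expMeasure_eq_withDensity, setLIntegral_withDensity_eq_setLIntegral_mul _ hpdf
    (by fun_prop) measurableSet_Ioi]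
  have hdensity : ∀ s ∈ Ioi x, (exponentialPDF a * fun s ↦ ENNReal.ofReal (exp (-(c * s)))) s
      = ENNReal.ofReal (a * exp (-(a + c) * s)) := by
    intro s hs
    rw [Pi.mul_apply, exponentialPDF_of_nonneg (hx.trans (le_of_lt hs)),
      ← ENNReal.ofReal_mul (by positivity), mul_assoc, ← exp_add]
    ring_nf
  have hint : IntegrableOn (fun s ↦ a * exp (-(a + c) * s)) (Ioi x) :=
    (integrableOn_exp_mul_Ioi (by linarith) x).const_mul a
  rw [setLIntegral_congr_fun measurableSet_Ioi hdensity,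
    ← ofReal_integral_eq_lintegral_ofReal hint (ae_of_all _ fun s ↦ by positivity),
    integral_const_mul, integral_exp_mul_Ioi (by linarith)]
  congr 1
  field_simp

def separationRegion (β x : ℝ) : Set (ℝ × ℝ) := {p | 0 < p.1 ∧ β * max p.1 x < p.2}

lemma measurableSet_separationRegion (β x : ℝ) : MeasurableSet (separationRegion β x) :=
  (measurableSet_lt measurable_const measurable_fst).inter
    (measurableSet_lt (by fun_prop) measurable_snd)

lemma psi_eq {a b β B : ℝ} :
    psi B β a b = exp (-(b * β * β ^ (-B))) * (1 - exp (-(a * β ^ (-B))))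
      + a * exp (-((a + b * β) * β ^ (-B))) / (a + b * β) := by
  rw [psi, sub_mul, one_mul, ← exp_add, mul_sub, mul_one, ← exp_add]
  ring_nf

lemma expMeasure_prod_separationRegion {a b β : ℝ} (ha : 0 < a) (hb : 0 < b) (hβ : 0 < β)
    (B : ℝ) : ((expMeasure a).prod (expMeasure b)).real (separationRegion β (β ^ (-B)))
      = psi B β a b := by
  have := isProbabilityMeasure_expMeasure hb
  set x := β ^ (-B)
  have hx : 0 < x := rpow_pos_of_pos hβ _
  have hslice : ∀ s, expMeasure b (Prod.mk s ⁻¹' separationRegion β x)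
      = (Ioi 0).indicator (fun s ↦ ENNReal.ofReal (exp (-(b * β * max s x)))) s := by
    intro s
    by_cases hs : 0 < s
    · have hpre : Prod.mk s ⁻¹' separationRegion β x = Ioi (β * max s x) := by
        ext t; simp [separationRegion, hs]
      rw [hpre, expMeasure_Ioi hb (by positivity), indicator_of_mem (mem_Ioi.mpr hs), mul_assoc]
    · have hpre : Prod.mk s ⁻¹' separationRegion β x = ∅ := by
        ext t; simp [separationRegion, hs]
      rw [hpre, measure_empty, indicator_of_notMem (mt mem_Ioi.mp hs)]
  have hclamped : ∀ s ∈ Ioc 0 x, ENNReal.ofReal (exp (-(b * β * max s x)))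
      = ENNReal.ofReal (exp (-(b * β * x))) := fun s hs ↦ by rw [max_eq_right hs.2]
  have hfree : ∀ s ∈ Ioi x, ENNReal.ofReal (exp (-(b * β * max s x)))
      = ENNReal.ofReal (exp (-(b * β * s))) := fun s hs ↦ by rw [max_eq_left (le_of_lt hs)]
  have hclamped_nonneg : 0 ≤ exp (-(b * β * x)) * (1 - exp (-(a * x))) :=
    mul_nonneg (exp_pos _).le (one_sub_exp_neg_mul_nonneg ha.le hx.le)
  have hfree_nonneg : 0 ≤ a * exp (-((a + b * β) * x)) / (a + b * β) := by positivity
  rw [measureReal_def, Measure.prod_apply (measurableSet_separationRegion β x),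
    lintegral_congr hslice, lintegral_indicator measurableSet_Ioi, ← Ioc_union_Ioi_eq_Ioi hx.le,
    lintegral_union measurableSet_Ioi Ioc_disjoint_Ioi_same,
    setLIntegral_congr_fun measurableSet_Ioc hclamped, setLIntegral_const,
    expMeasure_Ioc_zero ha hx.le, setLIntegral_congr_fun measurableSet_Ioi hfree,
    setLIntegral_Ioi_exp_expMeasure ha (by positivity) hx.le,
    ← ENNReal.ofReal_mul (by positivity), ← ENNReal.ofReal_add hclamped_nonneg hfree_nonneg,
    ENNReal.toReal_ofReal (add_nonneg hclamped_nonneg hfree_nonneg), psi_eq]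

lemma ProbabilityTheory.IndepFun.measure_prodMk_preimage {Ω α γ : Type*} [MeasurableSpace Ω]
    [MeasurableSpace α] [MeasurableSpace γ] {μ : Measure Ω} [IsFiniteMeasure μ] {X : Ω → α}
    {Y : Ω → γ} (h : IndepFun X Y μ) (hX : Measurable X) (hY : Measurable Y)
    {s : Set (α × γ)} (hs : MeasurableSet s) :
    μ ((fun ω ↦ (X ω, Y ω)) ⁻¹' s) = (μ.map X).prod (μ.map Y) s := by
  rw [← Measure.map_apply (hX.prodMk hY) hs,
    (indepFun_iff_map_prod_eq_prod_map_map hX.aemeasurable hY.aemeasurable).mp h]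

lemma measureReal_prodMk_preimage_separationRegion {Ω : Type*} [MeasurableSpace Ω]
    {μ : Measure Ω} [IsFiniteMeasure μ] {a b β : ℝ} (ha : 0 < a) (hb : 0 < b) (hβ : 0 < β)
    (B : ℝ) {X Y : Ω → ℝ} (h : IndepFun X Y μ) (hX : Measurable X) (hY : Measurable Y)
    (hlawX : μ.map X = expMeasure a) (hlawY : μ.map Y = expMeasure b) :
    μ.real ((fun ω ↦ (X ω, Y ω)) ⁻¹' separationRegion β (β ^ (-B))) = psi B β a b := by
  rw [measureReal_def, h.measure_prodMk_preimage hX hY (measurableSet_separationRegion _ _),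
    hlawX, hlawY, ← measureReal_def, expMeasure_prod_separationRegion ha hb hβ]

theorem prob_different_backoff_timers_general
    {Ω : Type*} [MeasurableSpace Ω] (μ : Measure Ω) [IsProbabilityMeasure μ]
    (li lj : ℝ) (hli : 0 < li) (hlj : 0 < lj)
    (β : ℝ) (hβ : 1 < β) (B : ℕ)
    (Zi Zj : Ω → ℝ) (hZi : Measurable Zi) (hZj : Measurable Zj)
    (hindep : IndepFun Zi Zj μ)
    (hlawi : Measure.map Zi μ = expMeasure li)
    (hlawj : Measure.map Zj μ = expMeasure lj) :
    psi B β li lj + psi B β lj li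
      ≤ (μ {ω | max ((B : ℤ) + ⌊Real.logb β (Zi ω)⌋) 0
            ≠ max ((B : ℤ) + ⌊Real.logb β (Zj ω)⌋) 0}).toReal := by
  have hβ0 : 0 < β := zero_lt_one.trans hβ
  set R := separationRegion β (β ^ (-(B : ℝ)))
  have hlt {z w : ℝ} (h : (z, w) ∈ R) : backoffTimer B β z < backoffTimer B β w :=
    backoffTimer_lt_backoffTimer hβ h.1 h.2.le
  have hdisj : Disjoint ((fun ω ↦ (Zi ω, Zj ω)) ⁻¹' R) ((fun ω ↦ (Zj ω, Zi ω)) ⁻¹' R) :=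
    disjoint_left.mpr fun _ h h' ↦ (hlt h).asymm (hlt h')
  calc psi B β li lj + psi B β lj li
      = μ.real ((fun ω ↦ (Zi ω, Zj ω)) ⁻¹' R) + μ.real ((fun ω ↦ (Zj ω, Zi ω)) ⁻¹' R) := by
        rw [measureReal_prodMk_preimage_separationRegion hli hlj hβ0 _ hindep hZi hZj hlawi hlawj,
          measureReal_prodMk_preimage_separationRegion hlj hli hβ0 _ hindep.symm hZj hZi hlawj
            hlawi]
    _ = μ.real ((fun ω ↦ (Zi ω, Zj ω)) ⁻¹' R ∪ (fun ω ↦ (Zj ω, Zi ω)) ⁻¹' R) :=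
        (measureReal_union hdisj ((hZj.prodMk hZi) (measurableSet_separationRegion _ _))).symm
    _ ≤ μ.real {ω | backoffTimer B β (Zi ω) ≠ backoffTimer B β (Zj ω)} := by
        refine measureReal_mono ?_
        rintro ω (h | h)
        exacts [(hlt h).ne, (hlt h).ne']

/-- **Theorem 3 of the paper.** For independent exponential timers `Zᵢ, Zⱼ` with
rates `λᵢ, λⱼ`, the discrete backoff timers `D = max (B + ⌊log_β Z⌋) 0` differ with probability
at least `ψ(B, β, λᵢ, λⱼ) + ψ(B, β, λⱼ, λᵢ)`. -/
theorem prob_different_backoff_timers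
    {Ω : Type*} [MeasurableSpace Ω] (μ : Measure Ω) [IsProbabilityMeasure μ]
    (li lj : ℝ) (hli : 0 < li) (hlj : 0 < lj)
    (β : ℝ) (hβ : 1 < β) (B : ℕ) (hB : 0 < B)
    (Zi Zj : Ω → ℝ) (hZi : Measurable Zi) (hZj : Measurable Zj)
    (hindep : IndepFun Zi Zj μ)
    (hlawi : Measure.map Zi μ = expMeasure li)
    (hlawj : Measure.map Zj μ = expMeasure lj) :
    psi B β li lj + psi B β lj li
      ≤ (μ {ω | max ((B : ℤ) + ⌊Real.logb β (Zi ω)⌋) 0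
            ≠ max ((B : ℤ) + ⌊Real.logb β (Zj ω)⌋) 0}).toReal :=
  prob_different_backoff_timers_general μ li lj hli hlj β hβ B Zi Zj hZi hZj hindep hlawi hlawj
end

section
/- Let β > 1, let B be a positive integer, and let z_i, z_j > 0 be reals. Suppose that z_j > β z_i if z_i > β^{−B}, and z_j > β^{−B+1} if z_i ≤ β^{−B}. Then max(B + ⌊log_β z_i⌋, 0) < max(B + ⌊log_β z_j⌋, 0). -/
/-- If `z j > β * z i` whenever `z i > β^{-B}`, and `z j > β^{-B+1}` whenever
`z i ≤ β^{-B}`, then the discrete backoff timer of `i` is strictly smaller than that of `j`: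
`max (B + ⌊log_β z i⌋) 0 < max (B + ⌊log_β z j⌋) 0`. -/
theorem backoff_timer_strict_lt
    (β : ℝ) (hβ : 1 < β) (B : ℕ) (hB : 0 < B)
    (zi zj : ℝ) (hzi : 0 < zi) (hzj : 0 < zj)
    (h1 : zi > β ^ (-(B : ℝ)) → zj > β * zi)
    (h2 : zi ≤ β ^ (-(B : ℝ)) → zj > β ^ (-(B : ℝ) + 1)) :
    max ((B : ℤ) + ⌊Real.logb β zi⌋) 0 < max ((B : ℤ) + ⌊Real.logb β zj⌋) 0 := by
  have hβ0 : 0 < β := lt_trans one_pos hβ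
  have hlogpow : ∀ x : ℝ, Real.logb β (β ^ x) = x := fun x => Real.logb_rpow hβ0 (ne_of_gt hβ)
  by_cases hc : zi > β ^ (-(B : ℝ))
  · have hzj' := h1 hc
    -- logb zi > -B
    have hli : Real.logb β zi > -(B : ℝ) := by
      calc -(B:ℝ) = Real.logb β (β ^ (-(B:ℝ))) := (hlogpow _).symm
        _ < Real.logb β zi := Real.logb_lt_logb hβ (Real.rpow_pos_of_pos hβ0 _) hc
    have hfi : (-(B:ℤ)) ≤ ⌊Real.logb β zi⌋ := by
      apply Int.le_floor.mpr
      push_cast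
      linarith
    have hlj : Real.logb β zj > Real.logb β zi + 1 := by
      have : Real.logb β (β * zi) = 1 + Real.logb β zi := by
        rw [Real.logb_mul (ne_of_gt hβ0) (ne_of_gt hzi), Real.logb_self_eq_one hβ]
      have h := Real.logb_lt_logb hβ (by positivity) hzj'
      linarith [this ▸ h]
    have hfj : ⌊Real.logb β zi⌋ + 1 ≤ ⌊Real.logb β zj⌋ := by
      apply Int.le_floor.mpr
      push_cast
      have := Int.floor_le (Real.logb β zi)
      linarith
    have h0 : (0:ℤ) ≤ (B:ℤ) + ⌊Real.logb β zi⌋ := by omega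
    omega
  · push_neg at hc
    have hzj' := h2 hc
    have hli : Real.logb β zi ≤ -(B : ℝ) := by
      calc Real.logb β zi ≤ Real.logb β (β ^ (-(B:ℝ))) :=
            Real.logb_le_logb_of_le hβ hzi hc
        _ = -(B:ℝ) := hlogpow _
    have hfi : ⌊Real.logb β zi⌋ ≤ -(B:ℤ) := by
      have := Int.floor_le_floor hli
      rwa [show ⌊-(B:ℝ)⌋ = -(B:ℤ) by exact_mod_cast Int.floor_intCast (-(B:ℤ))] at this
    have hlj : Real.logb β zj > -(B:ℝ) + 1 := by
      calc -(B:ℝ) + 1 = Real.logb β (β ^ (-(B:ℝ) + 1)) := (hlogpow _).symm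
        _ < Real.logb β zj := Real.logb_lt_logb hβ (Real.rpow_pos_of_pos hβ0 _) hzj'
    have hfj : -(B:ℤ) + 1 ≤ ⌊Real.logb β zj⌋ := by
      apply Int.le_floor.mpr
      push_cast
      linarith
    omega
end

section
/- Let β > 1 and λ_i, λ_j > 0, and define ψ(B, β, λ_i, λ_j) = λ_i e^{−β^{−B}(λ_i + βλ_j)}/(λ_i + βλ_j) + (e^{λ_i β^{−B}} − 1) e^{−β^{−B}(λ_i + βλ_j)} for real B. Then the derivative of ψ with respect to B equals λ_j β^{−B+1} (ln β) (e^{λ_i β^{−B}} − 1) e^{−β^{−B}(λ_i + βλ_j)}, which is nonnegative; in particular B ↦ ψ(B, β, λ_i, λ_j) is monotone nondecreasing. -/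
open Real

lemma hasDerivAt_collisionProfile {a s : ℝ} (hs : s ≠ 0) (u : ℝ) :
    HasDerivAt (fun u => a * exp (-u * s) / s + (exp (a * u) - 1) * exp (-u * s))
      ((a - s) * (exp (a * u) - 1) * exp (-u * s)) u := by
  have hdecay : HasDerivAt (fun u => exp (-u * s)) (exp (-u * s) * (-1 * s)) u :=
    ((hasDerivAt_neg u).mul_const s).exp
  have hgrowth : HasDerivAt (fun u => exp (a * u)) (exp (a * u) * (a * 1)) u :=
    ((hasDerivAt_id u).const_mul a).exp
  refine (((hdecay.const_mul a).div_const s).add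
    ((hgrowth.sub_const 1).mul hdecay)).congr_deriv ?_
  field_simp
  ring

lemma hasDerivAt_const_rpow_neg {β : ℝ} (hβ : 0 < β) (B : ℝ) :
    HasDerivAt (fun B => β ^ (-B)) (-(β ^ (-B) * log β)) B := by
  refine ((hasDerivAt_neg B).const_rpow hβ).congr_deriv ?_
  ring

lemma psi_derivative_nonneg {β li lj : ℝ} (hβ : 1 < β) (hli : 0 ≤ li) (hlj : 0 ≤ lj) (B : ℝ) :
    0 ≤ lj * β ^ (-B + 1) * log β * (exp (li * β ^ (-B)) - 1)
      * exp (-(β ^ (-B)) * (li + β * lj)) := by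
  have hβ0 : 0 < β := one_pos.trans hβ
  have hlog : 0 ≤ log β := log_nonneg hβ.le
  have hgap : 0 ≤ exp (li * β ^ (-B)) - 1 := sub_nonneg.mpr (one_le_exp (by positivity))
  positivity

/-- For `β > 1` and `λᵢ, λⱼ > 0`, the derivative of `B ↦ ψ(B, β, λᵢ, λⱼ)`
equals `λⱼ β^{-B+1} (ln β) (e^{λᵢ β^{-B}} - 1) e^{-β^{-B}(λᵢ + β λⱼ)}`, which is nonnegative;
in particular `B ↦ ψ(B, β, λᵢ, λⱼ)` is monotone nondecreasing. -/
theorem psi_hasDerivAt_and_monotone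
    (β li lj : ℝ) (hβ : 1 < β) (hli : 0 < li) (hlj : 0 < lj) :
    (∀ B : ℝ,
      HasDerivAt (fun B => psi B β li lj)
        (lj * β ^ (-B + 1) * Real.log β * (Real.exp (li * β ^ (-B)) - 1)
          * Real.exp (-(β ^ (-B)) * (li + β * lj))) B
      ∧ 0 ≤ lj * β ^ (-B + 1) * Real.log β * (Real.exp (li * β ^ (-B)) - 1)
          * Real.exp (-(β ^ (-B)) * (li + β * lj)))
    ∧ Monotone (fun B => psi B β li lj) := by
  have hβ0 : 0 < β := one_pos.trans hβ
  have hderiv (B : ℝ) : HasDerivAt (fun B => psi B β li lj)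
      (lj * β ^ (-B + 1) * log β * (exp (li * β ^ (-B)) - 1)
        * exp (-(β ^ (-B)) * (li + β * lj))) B := by
    have hs : li + β * lj ≠ 0 := by positivity
    refine ((hasDerivAt_collisionProfile (a := li) hs (β ^ (-B))).comp B
      (hasDerivAt_const_rpow_neg hβ0 B)).congr_deriv ?_
    rw [rpow_add hβ0, rpow_one]
    ring
  have hnonneg := psi_derivative_nonneg hβ hli.le hlj.le
  exact ⟨fun B => ⟨hderiv B, hnonneg B⟩, monotone_of_hasDerivAt_nonneg hderiv hnonneg⟩
end

section
/- Let λ > 0 and let b be a real number. If Z is exponentially distributed with rate λ, then E[max(ln Z, −b)] = −b + Γ(0, λ e^{−b}), where Γ(0, x) = ∫_x^∞ t^{−1} e^{−t} dt is the upper incomplete gamma function. Equivalently, for β > 1 and real B, E[max(log_β Z, −B)] = −B + Γ(0, λ β^{−B}) / ln β. -/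
/-!
Write `max (log Z) (-b) = -b + (log Z + b)⁺`. By the layer-cake formula the expectation of the
positive part is `∫₀^∞ P(log Z > t - b) dt = ∫₀^∞ exp (-λ e^{-b} e^t) dt`, and the substitution
`u = λ e^{-b} e^t` turns this into `Γ(0, λ e^{-b})`. The base-`β` version follows from
`log_β = log / log β` and `β^{-B} = e^{-B log β}`.
-/

open MeasureTheory ProbabilityTheory

/-- The upper incomplete gamma function at `0`: `Γ(0, x) = ∫_x^∞ t⁻¹ e^{-t} dt`. -/
noncomputable def upperGamma0 (x : ℝ) : ℝ := ∫ t in Set.Ioi x, t⁻¹ * Real.exp (-t)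

open Real Set

theorem upperGamma0_eq_integral_exp_neg_mul_exp {K : ℝ} (hK : 0 < K) :
    upperGamma0 K = ∫ t in Ioi 0, exp (-(K * exp t)) := by
  have hscale : ∫ y in Ioi 1, y⁻¹ * exp (-(K * y)) = upperGamma0 K := by
    have h := integral_comp_mul_left_Ioi (fun u ↦ u⁻¹ * exp (-u)) 1 hK
    simp only [mul_one, smul_eq_mul, mul_inv, mul_assoc, integral_const_mul] at h
    exact mul_left_cancel₀ (inv_ne_zero hK.ne') h
  have hexp := integral_comp_exp_Ioi (fun y ↦ y⁻¹ * exp (-(K * y))) 0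
  simp only [exp_zero, smul_eq_mul, mul_inv_cancel_left₀ (exp_pos _).ne'] at hexp
  rw [hexp, hscale]

theorem integrableOn_exp_neg_mul_exp {K : ℝ} (hK : 0 < K) (a : ℝ) :
    IntegrableOn (fun t ↦ exp (-(K * exp t))) (Ioi a) := by
  refine (exp_neg_integrableOn_Ioi a hK).mono' (by fun_prop) (ae_of_all _ fun t ↦ ?_)
  rw [norm_of_nonneg (exp_pos _).le, exp_le_exp, neg_mul, neg_le_neg_iff]
  exact mul_le_mul_of_nonneg_left ((le_add_of_nonneg_right zero_le_one).trans
    (add_one_le_exp t)) hK.le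

theorem expMeasure_real_Ioi {r x : ℝ} (hr : 0 < r) (hx : 0 ≤ x) :
    (expMeasure r).real (Ioi x) = exp (-(r * x)) := by
  have := isProbabilityMeasure_expMeasure hr
  rw [← compl_Iic, probReal_compl_eq_one_sub measurableSet_Iic, ← cdf_eq_real,
    cdf_expMeasure_eq hr, if_pos hx, sub_sub_cancel]

theorem expMeasure_Iic_zero {r : ℝ} (hr : 0 < r) : expMeasure r (Iic 0) = 0 := by
  have := isProbabilityMeasure_expMeasure hr
  rw [← measureReal_eq_zero_iff, ← cdf_eq_real, cdf_expMeasure_eq hr, if_pos le_rfl, mul_zero,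
    neg_zero, exp_zero, sub_self]

theorem expMeasure_real_setOf_lt_log {r : ℝ} (hr : 0 < r) (a : ℝ) :
    (expMeasure r).real {z | a < log z} = exp (-(r * exp a)) := by
  -- `log` takes junk values on `z ≤ 0`, which is a null set for the exponential law.
  have hpos : {z | a < log z} ∩ Ioi 0 = Ioi (exp a) := by
    ext z
    simp only [mem_inter_iff, mem_ofPred_eq, mem_Ioi]
    exact ⟨fun ⟨h, hz⟩ ↦ (lt_log_iff_exp_lt hz).mp h,
      fun h ↦ ⟨(lt_log_iff_exp_lt ((exp_pos a).trans h)).mpr h, (exp_pos a).trans h⟩⟩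
  rw [← expMeasure_real_Ioi hr (exp_pos a).le, ← hpos, measureReal_def, measureReal_def,
    measure_inter_conull (by rw [compl_Ioi]; exact expMeasure_Iic_zero hr)]

theorem integral_max_eq_add_integral_measureReal_lt {α : Type*} [MeasurableSpace α]
    {ν : Measure α} [IsProbabilityMeasure ν] {Y : α → ℝ} (hY : AEMeasurable Y ν) (c : ℝ)
    (htail : IntegrableOn (fun t ↦ ν.real {x | c + t < Y x}) (Ioi 0)) :
    ∫ x, max (Y x) c ∂ν = c + ∫ t in Ioi 0, ν.real {x | c + t < Y x} := by
  set f : α → ℝ := fun x ↦ max (Y x) c - c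
  have hf_nonneg : 0 ≤ᵐ[ν] f := ae_of_all _ fun x ↦ sub_nonneg.mpr (le_max_right _ _)
  have hf_meas : AEMeasurable f ν := (hY.max aemeasurable_const).sub aemeasurable_const
  have hlevel : ∀ t ∈ Ioi (0 : ℝ), {x | t < f x} = {x | c + t < Y x} := fun t ht ↦ by
    ext x
    simp only [f, mem_ofPred_eq, lt_sub_iff_add_lt', lt_max_iff, add_lt_iff_neg_left,
      not_lt_of_gt (mem_Ioi.mp ht), or_false]
  have hlintegral : ∫⁻ x, ENNReal.ofReal (f x) ∂ν
      = ENNReal.ofReal (∫ t in Ioi 0, ν.real {x | c + t < Y x}) := by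
    rw [lintegral_eq_lintegral_meas_lt ν hf_nonneg hf_meas,
      setLIntegral_congr_fun measurableSet_Ioi fun t ht ↦ by rw [hlevel t ht],
      ofReal_integral_eq_lintegral_ofReal htail (ae_of_all _ fun _ ↦ measureReal_nonneg)]
    exact lintegral_congr fun t ↦ (ofReal_measureReal (measure_ne_top _ _)).symm
  have hf_int : Integrable f ν := ⟨hf_meas.aestronglyMeasurable,
    (hasFiniteIntegral_iff_ofReal hf_nonneg).mpr (hlintegral ▸ ENNReal.ofReal_lt_top)⟩
  calc ∫ x, max (Y x) c ∂ν = ∫ x, (f x + c) ∂ν := by simp only [f, sub_add_cancel]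
    _ = ∫ x, f x ∂ν + c := by rw [integral_add hf_int (integrable_const c), integral_const,
        probReal_univ, one_smul]
    _ = c + ∫ t in Ioi 0, ν.real {x | c + t < Y x} := by
      rw [hf_int.integral_eq_integral_meas_lt hf_nonneg,
        setIntegral_congr_fun measurableSet_Ioi fun t ht ↦ by rw [hlevel t ht], add_comm]

theorem integral_max_log_expMeasure {r : ℝ} (hr : 0 < r) (b : ℝ) :
    ∫ z, max (log z) (-b) ∂expMeasure r = -b + upperGamma0 (r * exp (-b)) := by
  have := isProbabilityMeasure_expMeasure hr
  have htail : ∀ t, (expMeasure r).real {z | -b + t < log z} = exp (-(r * exp (-b) * exp t)) :=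
    fun t ↦ by rw [expMeasure_real_setOf_lt_log hr, exp_add, mul_assoc]
  have hK : 0 < r * exp (-b) := by positivity
  rw [integral_max_eq_add_integral_measureReal_lt measurable_log.aemeasurable (-b)
      (by simpa only [htail] using integrableOn_exp_neg_mul_exp hK 0),
    upperGamma0_eq_integral_exp_neg_mul_exp hK]
  simp only [htail]

theorem max_logb_eq_max_log_div {β : ℝ} (hβ : 1 < β) (z B : ℝ) :
    max (logb β z) (-B) = max (log z) (-(B * log β)) / log β := by
  have hlog : 0 < log β := log_pos hβ
  rw [← max_div_div_right hlog.le, log_div_log, neg_div, mul_div_cancel_right₀ _ hlog.ne']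

/-- If `Z` is exponentially distributed with rate `λ > 0`, then
`E[max (ln Z) (-b)] = -b + Γ(0, λ e^{-b})`; equivalently, for `β > 1` and real `B`,
`E[max (log_β Z) (-B)] = -B + Γ(0, λ β^{-B}) / ln β`. -/
theorem exp_max_log_eq
    {Ω : Type*} [MeasurableSpace Ω] (μ : Measure Ω) [IsProbabilityMeasure μ]
    (lam : ℝ) (hlam : 0 < lam)
    (Z : Ω → ℝ) (hZ : Measurable Z)
    (hlaw : Measure.map Z μ = expMeasure lam) :
    (∀ b : ℝ, ∫ ω, max (Real.log (Z ω)) (-b) ∂μ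
        = -b + upperGamma0 (lam * Real.exp (-b)))
    ∧ ∀ β : ℝ, 1 < β → ∀ B : ℝ,
        ∫ ω, max (Real.logb β (Z ω)) (-B) ∂μ
          = -B + upperGamma0 (lam * β ^ (-B)) / Real.log β := by
  have hln : ∀ b : ℝ, ∫ ω, max (log (Z ω)) (-b) ∂μ = -b + upperGamma0 (lam * exp (-b)) :=
    fun b ↦ by
      rw [← integral_map hZ.aemeasurable (measurable_log.max measurable_const).aestronglyMeasurable,
        hlaw, integral_max_log_expMeasure hlam]
  refine ⟨hln, fun β hβ B ↦ ?_⟩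
  have hlog : log β ≠ 0 := (log_pos hβ).ne'
  have hrpow : β ^ (-B) = exp (-(B * log β)) := by
    rw [rpow_def_of_pos (zero_lt_one.trans hβ), mul_comm, neg_mul]
  simp only [max_logb_eq_max_log_div hβ, integral_div, hln, hrpow]
  field_simp
end
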